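/- Let m ≥ 1, let 0 = δ_0 < δ_1 < δ_2 < … < δ_m be real numbers and η_1, …, η_m > 0, and define the real polynomial h(X) = ∏_{i=1}^{m}(X + δ_i) − Σ_{j=1}^{m} η_j ∏_{i≠j}(X + δ_i). If h(0) > 0, then for each 1 ≤ i ≤ m the polynomial h has a root in the open interval (−δ_i, −δ_{i−1}); in particular, h has m distinct real roots, all of which are negative. -/

import Mathlib

/-!
Evaluating `h` at `-δᵢ` kills every term but one, leaving `-ηᵢ ∏_{k≠i}(δₖ - δᵢ)`, whose sign is
`(-1)^i` because exactly `i - 1` factors are negative. Together with `h(-δ₀) = h(0) > 0`, the values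
`h(-δ₀), h(-δ₁), …, h(-δₘ)` alternate strictly in sign, so the intermediate value theorem gives a
root in each of the `m` disjoint intervals `(-δᵢ, -δᵢ₋₁)`.
-/

open Finset

theorem Finset.univ_erase_eq_Iio_union_Ioi {α : Type*} [LinearOrder α] [Fintype α]
    [LocallyFiniteOrderBot α] [LocallyFiniteOrderTop α] (a : α) :
    univ.erase a = Iio a ∪ Ioi a := by
  ext k
  simp

theorem Finset.disjoint_Iio_Ioi {α : Type*} [Preorder α] [LocallyFiniteOrderBot α]
    [LocallyFiniteOrderTop α] (a : α) : Disjoint (Iio a) (Ioi a) :=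
  disjoint_left.mpr fun _ hlt hgt => (mem_Iio.mp hlt).asymm (mem_Ioi.mp hgt)

theorem neg_one_pow_mul_prod_erase_sub_pos {n : ℕ} {d : Fin n → ℝ} (hd : StrictMono d)
    (i : Fin n) : 0 < (-1) ^ (i : ℕ) * ∏ k ∈ univ.erase i, (d k - d i) := by
  have below : ∏ k ∈ Iio i, (d k - d i) = (-1) ^ (i : ℕ) * ∏ k ∈ Iio i, (d i - d k) := by
    rw [← Fin.card_Iio i, ← prod_neg]
    exact prod_congr rfl fun k _ => (neg_sub _ _).symm
  rw [univ_erase_eq_Iio_union_Ioi, prod_union (disjoint_Iio_Ioi i), below, ← mul_assoc,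
    ← mul_assoc, ← pow_add, Even.neg_one_pow ⟨_, rfl⟩, one_mul]
  exact mul_pos (prod_pos fun k hk => sub_pos.mpr (hd (mem_Iio.mp hk)))
    (prod_pos fun k hk => sub_pos.mpr (hd (mem_Ioi.mp hk)))

theorem prod_sub_sum_mul_prod_erase_at_neg {R ι : Type*} [CommRing R] [Fintype ι]
    [DecidableEq ι] (d η : ι → R) (i : ι) :
    ∏ k, (-d i + d k) - ∑ j, η j * ∏ k ∈ univ.erase j, (-d i + d k) =
      -(η i * ∏ k ∈ univ.erase i, (d k - d i)) := by
  have vanish : ∀ s : Finset ι, i ∈ s → ∏ k ∈ s, (-d i + d k) = 0 :=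
    fun s hi => prod_eq_zero hi (neg_add_cancel _)
  rw [vanish _ (mem_univ i), sum_eq_single i
    (fun j _ hji => by rw [vanish _ (mem_erase.mpr ⟨Ne.symm hji, mem_univ i⟩), mul_zero])
    (fun hi => absurd (mem_univ i) hi)]
  simp only [neg_add_eq_sub, zero_sub]

theorem exists_mem_Ioo_eq_zero_of_mul_neg {f : ℝ → ℝ} (hf : Continuous f) {a b : ℝ}
    (hab : a ≤ b) (hsign : f a * f b < 0) : ∃ x ∈ Set.Ioo a b, f x = 0 := by
  rcases mul_neg_iff.mp hsign with ⟨ha, hb⟩ | ⟨ha, hb⟩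
  · exact intermediate_value_Ioo' hab hf.continuousOn ⟨hb, ha⟩
  · exact intermediate_value_Ioo hab hf.continuousOn ⟨ha, hb⟩

theorem exists_roots_of_alternating_sign {m : ℕ} {f : ℝ → ℝ} (hf : Continuous f)
    {x : Fin (m + 1) → ℝ} (hx : StrictAnti x)
    (hsign : ∀ k : Fin (m + 1), 0 < (-1) ^ (k : ℕ) * f (x k))
    (i : Fin m) : ∃ y ∈ Set.Ioo (x i.succ) (x i.castSucc), f y = 0 := by
  refine exists_mem_Ioo_eq_zero_of_mul_neg hf (hx Fin.castSucc_lt_succ).le ?_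
  have odd : (-1 : ℝ) ^ ((i : ℕ) + 1 + i) = -1 := Odd.neg_one_pow ⟨i, by ring⟩
  calc f (x i.succ) * f (x i.castSucc)
      = -((-1) ^ ((i : ℕ) + 1 + i) * f (x i.succ) * f (x i.castSucc)) := by rw [odd]; ring
    _ = -(((-1) ^ (i.succ : ℕ) * f (x i.succ)) * ((-1) ^ (i.castSucc : ℕ) * f (x i.castSucc))) := by
      rw [Fin.val_succ, Fin.val_castSucc, pow_add]; ring
    _ < 0 := neg_neg_of_pos (mul_pos (hsign i.succ) (hsign i.castSucc))

theorem strictAnti_of_forall_mem_Ioo {α : Type*} [Preorder α] {m : ℕ} {x : Fin (m + 1) → α}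
    (hx : Antitone x) {ρ : Fin m → α} (hρ : ∀ i, ρ i ∈ Set.Ioo (x i.succ) (x i.castSucc)) :
    StrictAnti ρ :=
  fun i j hij => calc
    ρ j < x j.castSucc := (hρ j).2
    _ ≤ x i.succ := hx (Fin.succ_le_castSucc_iff.mpr hij)
    _ < ρ i := (hρ i).1

theorem stmt_8 (m : ℕ) (δ : Fin (m + 1) → ℝ) (η : Fin m → ℝ)
    (hδ0 : δ 0 = 0) (hδ : StrictMono δ) (hη : ∀ j, 0 < η j)
    (h : ℝ → ℝ)
    (hh : ∀ X, h X = ∏ i : Fin m, (X + δ i.succ) -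
      ∑ j : Fin m, η j * ∏ i ∈ Finset.univ.erase j, (X + δ i.succ))
    (h0 : 0 < h 0) :
    (∀ i : Fin m, ∃ X ∈ Set.Ioo (-δ i.succ) (-δ i.castSucc), h X = 0) ∧
    ∃ ρ : Fin m → ℝ, Function.Injective ρ ∧ ∀ i, ρ i < 0 ∧ h (ρ i) = 0 := by
  have hcont : Continuous h := by
    rw [funext hh]
    fun_prop
  have alternating : ∀ k : Fin (m + 1), 0 < (-1) ^ (k : ℕ) * h (-δ k) := by
    refine Fin.cases (by simpa [hδ0] using h0) fun i => ?_
    have value := prod_sub_sum_mul_prod_erase_at_neg (fun k : Fin m => δ k.succ) η i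
    have sign := neg_one_pow_mul_prod_erase_sub_pos (d := fun k : Fin m => δ k.succ)
      (hδ.comp Fin.strictMono_succ) i
    rw [hh, value, Fin.val_succ, pow_succ]
    linarith [mul_pos (hη i) sign]
  have roots := exists_roots_of_alternating_sign hcont (x := fun k => -δ k)
    (fun _ _ hkl => neg_lt_neg (hδ hkl)) alternating
  refine ⟨roots, ?_⟩
  choose ρ hρ hρ_root using roots
  refine ⟨ρ, (strictAnti_of_forall_mem_Ioo (fun _ _ hkl => neg_le_neg (hδ.monotone hkl))
    hρ).injective, fun i => ⟨(hρ i).2.trans_le ?_, hρ_root i⟩⟩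
  simpa [hδ0] using hδ.monotone (Fin.zero_le i.castSucc)
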